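/- arXiv:1701.01766 — 4 statements merged into one kernel-verified Lean document; each statement's English description precedes it below -/
import Mathlib

section
/- Let G be a group and H a normal subgroup of G of finite index, and let φ be a finite-dimensional complex representation of G whose restriction to H is irreducible. Then for any irreducible finite-dimensional complex representation ρ of the quotient group G/H, the tensor product ρ ⊗ φ (where ρ is inflated to a representation of G via the quotient map G → G/H) is an irreducible representation of G. -/
/-!
Over `H` the representation `ρ ⊗ φ` is a sum of copies of `φ|_H`. By Burnside's theorem (Schur's
lemma plus Jacobson density) the operators `φ h`, `h ∈ H`, generate the whole algebra `End V`, so a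
`G`-stable subspace `W ⊆ U ⊗ V` is stable under every `id ⊗ T`. Contracting with functionals on
`V` then shows `W = U' ⊗ V` with `U' = {u | u ⊗ V ⊆ W}`, and `U'` is `ρ`-stable, hence `0` or `U`.
-/

open scoped TensorProduct

/-- A submodule `p` is a subrepresentation of `ρ` if it is stable under the action. -/
def IsSubrep {k G V : Type*} [CommSemiring k] [Monoid G] [AddCommMonoid V] [Module k V]
    (ρ : Representation k G V) (p : Submodule k V) : Prop :=
  ∀ g : G, ∀ v ∈ p, ρ g v ∈ p

/-- A representation is irreducible if it is nonzero and has no proper nonzero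
subrepresentations. -/
def IsIrreducibleRep {k G V : Type*} [CommSemiring k] [Monoid G] [AddCommMonoid V] [Module k V]
    (ρ : Representation k G V) : Prop :=
  Nontrivial V ∧ ∀ p : Submodule k V, IsSubrep ρ p → p = ⊥ ∨ p = ⊤

/-- Two representations are isomorphic if there is an equivariant linear equivalence. -/
def RepIso {k G V W : Type*} [CommSemiring k] [Monoid G] [AddCommMonoid V] [Module k V]
    [AddCommMonoid W] [Module k W]
    (ρ : Representation k G V) (σ : Representation k G W) : Prop :=
  ∃ e : V ≃ₗ[k] W, ∀ (g : G) (v : V), e (ρ g v) = σ g (e v)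

open Module

theorem Subalgebra.eq_top_of_isSimpleModule {k V : Type*} [Field k] [IsAlgClosed k]
    [AddCommGroup V] [Module k V] [FiniteDimensional k V]
    (A : Subalgebra k (End k V)) [IsSimpleModule A V] : A = ⊤ := by
  have : Module.Finite (End A V) V := .of_restrictScalars_finite k _ _
  refine eq_top_iff.2 fun T _ => ?_
  -- By Schur every `A`-endomorphism of `V` is a scalar, so `T` commutes with all of them.
  let T' : End (End A V) V :=
    { T.toAddMonoidHom with
      map_smul' := fun g v => by
        obtain ⟨c, rfl⟩ := (IsSimpleModule.algebraMap_end_bijective_of_isAlgClosed k).2 g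
        exact T.map_smul c v }
  obtain ⟨a, ha⟩ := Module.Finite.toModuleEnd_moduleEnd_surjective T'
  have : (a : End k V) = T := LinearMap.ext fun v => LinearMap.congr_fun ha v
  exact this ▸ a.2

theorem adjoin_range_eq_top_of_isIrreducibleRep {k M V : Type*} [Field k] [IsAlgClosed k]
    [Monoid M] [AddCommGroup V] [Module k V] [FiniteDimensional k V]
    {ψ : Representation k M V} (hψ : IsIrreducibleRep ψ) :
    Algebra.adjoin k (Set.range ψ) = ⊤ := by
  set A := Algebra.adjoin k (Set.range ψ)
  have : Nontrivial V := hψ.1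
  have : IsSimpleModule A V :=
    { eq_bot_or_eq_top N := by
        have hN : IsSubrep ψ (N.restrictScalars k) := fun m _ hv =>
          N.smul_mem (⟨ψ m, Algebra.subset_adjoin ⟨m, rfl⟩⟩ : A) hv
        simpa only [Submodule.restrictScalars_eq_bot_iff, Submodule.restrictScalars_eq_top_iff]
          using hψ.2 _ hN }
  exact A.eq_top_of_isSimpleModule

namespace TensorProduct

variable {R M N : Type*} [CommSemiring R] [AddCommMonoid M] [Module R M]
  [AddCommMonoid N] [Module R N]

theorem lTensor_mem_of_mem_adjoin {s : Set (End R N)} {W : Submodule R (M ⊗[R] N)}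
    (hs : ∀ T ∈ s, ∀ x ∈ W, T.lTensor M x ∈ W) {T : End R N}
    (hT : T ∈ Algebra.adjoin R s) : ∀ x ∈ W, T.lTensor M x ∈ W := by
  induction hT using Algebra.adjoin_induction with
  | mem T hT => exact hs T hT
  | algebraMap r =>
    intro x hx
    rw [Algebra.algebraMap_eq_smul_one, LinearMap.lTensor_smul, Module.End.one_eq_id,
      LinearMap.lTensor_id]
    exact W.smul_mem r hx
  | add T T' _ _ hT hT' =>
    intro x hx
    simpa only [LinearMap.lTensor_add, LinearMap.add_apply] using W.add_mem (hT x hx) (hT' x hx)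
  | mul T T' _ _ hT hT' =>
    intro x hx
    simpa only [LinearMap.lTensor_mul, Module.End.mul_apply] using hT _ (hT' x hx)

theorem lTensor_smulRight (f : Dual R N) (v : N) (w : M ⊗[R] N) :
    (f.smulRight v).lTensor M w = TensorProduct.rid R M (f.lTensor M w) ⊗ₜ v := by
  induction w with
  | zero => simp
  | tmul m n => simp [smul_tmul]
  | add x y hx hy => simp [hx, hy, add_tmul]

theorem eq_zero_of_forall_rid_lTensor_eq_zero [Free R N] {w : M ⊗[R] N}
    (h : ∀ f : Dual R N, TensorProduct.rid R M (f.lTensor M w) = 0) : w = 0 := by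
  let e := equivFinsuppOfBasisRight (M := M) (Free.chooseBasis R N)
  refine e.map_eq_zero_iff.1 (Finsupp.ext fun i => ?_)
  rw [equivFinsuppOfBasisRight_apply]
  exact h _

theorem _root_.Submodule.eq_bot_of_forall_lTensor_mem [Free R N] {W : Submodule R (M ⊗[R] N)}
    (hW : ∀ T : End R N, ∀ x ∈ W, T.lTensor M x ∈ W) (hM : ∀ m : M, (∀ n, m ⊗ₜ n ∈ W) → m = 0) :
    W = ⊥ :=
  (Submodule.eq_bot_iff W).2 fun w hw => eq_zero_of_forall_rid_lTensor_eq_zero fun f =>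
    hM _ fun n => lTensor_smulRight f n w ▸ hW _ w hw

end TensorProduct

theorem Representation.tprod_inflation_apply_of_mem {k G U V : Type*} [CommSemiring k] [Group G]
    {H : Subgroup G} [H.Normal] [AddCommMonoid U] [Module k U] [AddCommMonoid V] [Module k V]
    (ρ : Representation k (G ⧸ H) U) (φ : Representation k G V) {h : G} (hh : h ∈ H) :
    tprod (ρ.comp (QuotientGroup.mk' H)) φ h = (φ h).lTensor U := by
  rw [tprod_apply, MonoidHom.comp_apply, QuotientGroup.mk'_apply,
    (QuotientGroup.eq_one_iff h).2 hh, map_one]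
  rfl

open TensorProduct in
theorem inflation_tensor_irreducible_general {G : Type*} [Group G] (H : Subgroup G)
    [H.Normal]
    {V : Type*} [AddCommGroup V] [Module ℂ V] [FiniteDimensional ℂ V]
    (φ : Representation ℂ G V)
    (hφ : IsIrreducibleRep (φ.comp H.subtype))
    {U : Type*} [AddCommGroup U] [Module ℂ U]
    (ρ : Representation ℂ (G ⧸ H) U)
    (hρ : IsIrreducibleRep ρ) :
    IsIrreducibleRep (Representation.tprod (ρ.comp (QuotientGroup.mk' H)) φ) := by
  have : Nontrivial U := hρ.1
  have : Nontrivial V := hφ.1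
  refine ⟨inferInstance, fun W hW => ?_⟩
  have hW_lTensor : ∀ T : End ℂ V, ∀ x ∈ W, T.lTensor U x ∈ W := fun T =>
    lTensor_mem_of_mem_adjoin (by
        rintro _ ⟨h, rfl⟩
        simpa only [MonoidHom.comp_apply, Subgroup.coe_subtype,
          ← Representation.tprod_inflation_apply_of_mem ρ φ h.2] using hW h)
      ((adjoin_range_eq_top_of_isIrreducibleRep hφ).ge trivial)
  set U' : Submodule ℂ U := ⨅ v, W.comap ((TensorProduct.mk ℂ U V).flip v)
  have mem_U' : ∀ u, u ∈ U' ↔ ∀ v, u ⊗ₜ v ∈ W := by simp [U']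
  have hU' : IsSubrep ρ U' := by
    intro g u hu
    induction g using QuotientGroup.induction_on with | H g => ?_
    rw [mem_U'] at hu ⊢
    intro v
    simpa [Representation.tprod_apply] using hW g _ (hu (φ g⁻¹ v))
  rcases hρ.2 U' hU' with hbot | htop
  · exact Or.inl (W.eq_bot_of_forall_lTensor_mem hW_lTensor fun u hu => by
      simpa [hbot] using (mem_U' u).2 hu)
  · refine Or.inr (eq_top_iff.2 ?_)
    rw [← span_tmul_eq_top, Submodule.span_le]
    rintro _ ⟨u, v, rfl⟩
    exact (mem_U' u).1 (htop ▸ Submodule.mem_top) v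

/-- If `H` is a normal subgroup of finite index of `G`, `φ` is a
finite-dimensional complex representation of `G` whose restriction to `H` is irreducible,
and `ρ` is an irreducible finite-dimensional complex representation of `G ⧸ H`, then the
tensor product `ρ ⊗ φ` (with `ρ` inflated to `G` via the quotient map) is irreducible. -/
theorem inflation_tensor_irreducible {G : Type*} [Group G] (H : Subgroup G)
    [H.Normal] [H.FiniteIndex]
    {V : Type*} [AddCommGroup V] [Module ℂ V] [FiniteDimensional ℂ V]
    (φ : Representation ℂ G V)
    (hφ : IsIrreducibleRep (φ.comp H.subtype))
    {U : Type*} [AddCommGroup U] [Module ℂ U] [FiniteDimensional ℂ U]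
    (ρ : Representation ℂ (G ⧸ H) U)
    (hρ : IsIrreducibleRep ρ) :
    IsIrreducibleRep (Representation.tprod (ρ.comp (QuotientGroup.mk' H)) φ) :=
  inflation_tensor_irreducible_general H φ hφ ρ hρ
end

section
/- Let G be a group and N a normal subgroup of G such that the quotient G/N is a finite perfect group. If φ₁ and φ₂ are finite-dimensional complex representations of G whose restrictions to N are irreducible and isomorphic to each other, then φ₁ and φ₂ are isomorphic. -/
open scoped TensorProduct

/-- Schur's lemma: an equivariant endomorphism of an irreducible representation over `ℂ`
is a scalar. -/
lemma schur_aux {H V : Type*} [Monoid H] [AddCommGroup V] [Module ℂ V] [FiniteDimensional ℂ V]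
    (ρ : Representation ℂ H V) (hirr : IsIrreducibleRep ρ)
    (f : V →ₗ[ℂ] V) (hf : ∀ (h : H) (v : V), f (ρ h v) = ρ h (f v)) :
    ∃ c : ℂ, ∀ v, f v = c • v := by
  obtain ⟨hnt, hmin⟩ := hirr
  obtain ⟨c, hc⟩ := Module.End.exists_eigenvalue f
  obtain ⟨v₀, hv₀⟩ := hc.exists_hasEigenvector
  refine ⟨c, ?_⟩
  set p : Submodule ℂ V := Module.End.eigenspace f c with hp
  have hsub : IsSubrep ρ p := by
    intro g v hv
    rw [hp, Module.End.mem_eigenspace_iff] at hv ⊢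
    rw [hf, hv, map_smul]
  rcases hmin p hsub with h | h
  · have hm : v₀ ∈ p := hv₀.1
    rw [h, Submodule.mem_bot] at hm
    exact absurd hm hv₀.2
  · intro v
    have : v ∈ p := h ▸ Submodule.mem_top
    rwa [hp, Module.End.mem_eigenspace_iff] at this

/-- Let `N` be a normal subgroup of `G` with `G ⧸ N` finite and perfect.
If `φ₁`, `φ₂` are finite-dimensional complex representations of `G` whose restrictions to
`N` are irreducible and isomorphic, then `φ₁ ≅ φ₂`. -/
theorem iso_of_res_iso_of_perfect_quotient {G : Type*} [Group G] (N : Subgroup G)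
    [N.Normal] [Finite (G ⧸ N)] (hperf : commutator (G ⧸ N) = ⊤)
    {V₁ V₂ : Type*} [AddCommGroup V₁] [Module ℂ V₁] [FiniteDimensional ℂ V₁]
    [AddCommGroup V₂] [Module ℂ V₂] [FiniteDimensional ℂ V₂]
    (φ₁ : Representation ℂ G V₁) (φ₂ : Representation ℂ G V₂)
    (h₁ : IsIrreducibleRep (φ₁.comp N.subtype))
    (h₂ : IsIrreducibleRep (φ₂.comp N.subtype))
    (hres : RepIso (φ₁.comp N.subtype) (φ₂.comp N.subtype)) :
    RepIso φ₁ φ₂ := by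
  obtain ⟨e, he⟩ := hres
  haveI : Nontrivial V₁ := h₁.1
  -- basic invertibility facts
  have hφ₁inv : ∀ (g : G) (v : V₁), φ₁ g⁻¹ (φ₁ g v) = v := by
    intro g v
    have : φ₁ g⁻¹ * φ₁ g = 1 := by rw [← map_mul, inv_mul_cancel, map_one]
    calc φ₁ g⁻¹ (φ₁ g v) = (φ₁ g⁻¹ * φ₁ g) v := rfl
    _ = v := by rw [this]; rfl
  have hφ₂inv : ∀ (g : G) (v : V₂), φ₂ g (φ₂ g⁻¹ v) = v := by
    intro g v
    have : φ₂ g * φ₂ g⁻¹ = 1 := by rw [← map_mul, mul_inv_cancel, map_one]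
    calc φ₂ g (φ₂ g⁻¹ v) = (φ₂ g * φ₂ g⁻¹) v := rfl
    _ = v := by rw [this]; rfl
  have hφ₂ne : ∀ (g : G) (w : V₂), w ≠ 0 → φ₂ g w ≠ 0 := by
    intro g w hw h0
    apply hw
    rw [← hφ₂inv g⁻¹ w]
    simp only [inv_inv]
    rw [h0, map_zero]
  have hφ₁ne : ∀ (g : G) (v : V₁), v ≠ 0 → φ₁ g v ≠ 0 := by
    intro g v hv h0
    apply hv
    rw [← hφ₁inv g v, h0, map_zero]
  -- he restated for elements of N
  have heN : ∀ n ∈ N, ∀ v : V₁, e (φ₁ n v) = φ₂ n (e v) := fun n hn v => he ⟨n, hn⟩ v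
  -- key scalar
  have key : ∀ g : G, ∃ c : ℂ, ∀ v : V₁, e (φ₁ g v) = c • φ₂ g (e v) := by
    intro g
    set f : V₁ →ₗ[ℂ] V₁ :=
      e.symm.toLinearMap ∘ₗ (φ₂ g⁻¹ ∘ₗ (e.toLinearMap ∘ₗ φ₁ g)) with hfdef
    have hf : ∀ (n : N) (v : V₁), f ((φ₁.comp N.subtype) n v) = (φ₁.comp N.subtype) n (f v) := by
      rintro ⟨n, hn⟩ v
      have hgng : g * n * g⁻¹ ∈ N := Subgroup.Normal.conj_mem ‹N.Normal› n hn g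
      have h1 : φ₁ g (φ₁ n v) = φ₁ (g * n * g⁻¹) (φ₁ g v) := by
        rw [← Module.End.mul_apply, ← Module.End.mul_apply, ← map_mul, ← map_mul]
        congr 1
        group
      simp only [hfdef, LinearMap.coe_comp, Function.comp_apply, LinearEquiv.coe_coe,
        MonoidHom.comp_apply, Subgroup.coe_subtype]
      have h2 : ∀ x : V₂, φ₂ g⁻¹ (φ₂ (g * n * g⁻¹) x) = φ₂ n (φ₂ g⁻¹ x) := by
        intro x
        rw [← Module.End.mul_apply, ← Module.End.mul_apply, ← map_mul, ← map_mul]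
        congr 1
        group
      rw [h1, heN _ hgng, h2]
      set y := (φ₂ g⁻¹) (e ((φ₁ g) v)) with hy
      rw [show φ₂ n y = φ₂ n (e (e.symm y)) from by rw [e.apply_symm_apply],
        ← heN n hn, LinearEquiv.symm_apply_apply]
    obtain ⟨c, hc⟩ := schur_aux (φ₁.comp N.subtype) h₁ f hf
    refine ⟨c, fun v => ?_⟩
    have := hc v
    simp only [hfdef, LinearMap.coe_comp, Function.comp_apply, LinearEquiv.coe_coe] at this
    have h5 : φ₂ g⁻¹ (e (φ₁ g v)) = e (c • v) := by
      rw [← this, LinearEquiv.apply_symm_apply]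
    have := congrArg (φ₂ g) h5
    rw [hφ₂inv] at this
    rw [this, map_smul, map_smul]
  choose c hc using key
  obtain ⟨v₀, hv₀⟩ := exists_ne (0 : V₁)
  have huniq : ∀ (g : G) (c' : ℂ), (∀ v : V₁, e (φ₁ g v) = c' • φ₂ g (e v)) → c' = c g := by
    intro g c' h'
    have h1 : c g • φ₂ g (e v₀) = c' • φ₂ g (e v₀) := (hc g v₀).symm.trans (h' v₀)
    have h2 : φ₂ g (e v₀) ≠ 0 := hφ₂ne g _ (by simpa using hv₀)
    have h3 : (c g - c') • φ₂ g (e v₀) = 0 := by rw [sub_smul, h1, sub_self]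
    rcases smul_eq_zero.mp h3 with h | h
    · exact (sub_eq_zero.mp h).symm
    · exact absurd h h2
  have hcne : ∀ g : G, c g ≠ 0 := by
    intro g h0
    have := hc g v₀
    rw [h0, zero_smul] at this
    exact hφ₁ne g v₀ hv₀ (by simpa using e.map_eq_zero_iff.mp this)
  have hcmul : ∀ g h : G, c (g * h) = c g * c h := by
    intro g h
    refine (huniq (g * h) (c g * c h) ?_).symm
    intro v
    rw [map_mul, map_mul]
    have h1 : (φ₁ g * φ₁ h) v = φ₁ g (φ₁ h v) := rfl
    have h2 : (φ₂ g * φ₂ h) (e v) = φ₂ g (φ₂ h (e v)) := rfl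
    rw [h1, h2, hc g, hc h, map_smul, smul_smul]
  have hcN : ∀ n ∈ N, c n = 1 := by
    intro n hn
    refine (huniq n 1 ?_).symm
    intro v
    rw [one_smul, heN n hn]
  -- build the character into ℂˣ
  let χ : G →* ℂˣ := MonoidHom.mk' (fun g => Units.mk0 (c g) (hcne g))
    (fun g h => by ext; simp [hcmul])
  have hχN : ∀ n ∈ N, χ n = 1 := by
    intro n hn
    ext
    simp [χ, hcN n hn]
  let χ' : G ⧸ N →* ℂˣ := QuotientGroup.lift N χ hχN
  have hχ' : ∀ q : G ⧸ N, χ' q = 1 := by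
    intro q
    have : q ∈ MonoidHom.ker χ' := by
      apply Abelianization.commutator_subset_ker χ'
      rw [hperf]
      trivial
    exact this
  have hc1 : ∀ g : G, c g = 1 := by
    intro g
    have : χ g = 1 := by
      have : χ' (QuotientGroup.mk g) = χ g := rfl
      rw [← this, hχ' _]
    have := congrArg Units.val this
    simpa [χ] using this
  refine ⟨e, fun g v => ?_⟩
  rw [hc g, hc1 g, one_smul]
end

section
/- Let K be a subgroup of SL(2, ℤ/5ℤ) of order 24, and let θ and θ′ be irreducible three-dimensional complex representations of SL(2, ℤ/5ℤ). Then the restrictions of θ and θ′ to K are irreducible and are isomorphic to each other as representations of K. -/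
open scoped TensorProduct

/-!
Let `θ` be a three-dimensional irreducible representation of `SL(2, 𝔽₅)`. The group is perfect,
so `det θ = 1`; by Schur `θ (-1)` is a scalar `c` with `c ^ 2 = 1` and `c ^ 3 = det θ (-1) = 1`,
so `θ (-1) = 1`. A normal subgroup containing an element other than `±1` is everything; hence
`θ g` is not a scalar for `g ≠ ±1`, since otherwise every commutator `⁅a, g⁆` would lie in
`ker θ`. For a non-scalar `f` of determinant `1` in dimension three, Cayley–Hamilton gives
`tr f = -1` when `f ^ 2 = 1` and `tr f = 0` when `f ^ 3 = 1`. So on elements of order dividing 24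
the character of `θ` does not depend on `θ`: it is `3` at `±1`, `-1` at elements of order 4 and
`0` at elements of order 3 and 6. For `|K| = 24` this gives `24 ⟨χ, χ⟩_K ≤ 9 a + (24 - a) ≤ 40`,
where `a ≤ 2` is the number of elements `±1` in `K`. Thus `⟨χ, χ⟩_K = 1`: the restriction is
irreducible, and two such restrictions, having the same character, are isomorphic.
-/

open Module Representation
open scoped MatrixGroups commutatorElement

section

variable {k G V W : Type*} [Field k] [AddCommGroup V] [Module k V] [AddCommGroup W] [Module k W]

theorem isIrreducibleRep_iff_isIrreducible [Monoid G] (ρ : Representation k G V) :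
    IsIrreducibleRep ρ ↔ ρ.IsIrreducible := by
  constructor
  · rintro ⟨hV, h⟩
    exact
      { exists_pair_ne := ⟨⊥, ⊤, fun e => bot_ne_top (congrArg Subrepresentation.toSubmodule e)⟩
        eq_bot_or_eq_top := fun p =>
          (h p.toSubmodule p.apply_mem_toSubmodule).imp Subrepresentation.ext
            Subrepresentation.ext }
  · intro h
    refine ⟨?_, fun p hp => ?_⟩
    · rw [← Submodule.nontrivial_iff (R := k)]
      exact ⟨⟨⊥, ⊤, fun e => bot_ne_top (Subrepresentation.ext e : (⊥ : Subrepresentation ρ) = ⊤)⟩⟩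
    · exact (eq_bot_or_eq_top (⟨p, hp⟩ : Subrepresentation ρ)).imp
        (congrArg Subrepresentation.toSubmodule) (congrArg Subrepresentation.toSubmodule)

theorem repIso_of_equiv [Monoid G] {ρ : Representation k G V} {σ : Representation k G W}
    (e : ρ.Equiv σ) : RepIso ρ σ :=
  ⟨e.toLinearEquiv, e.toIntertwiningMap.isIntertwining⟩

theorem IsIrreducibleRep.finrank_eq_one_of_forall_eq_one [Monoid G] {ρ : Representation k G V}
    (hρ : IsIrreducibleRep ρ) (h : ∀ g, ρ g = 1) : finrank k V = 1 := by
  have := hρ.1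
  obtain ⟨v, hv⟩ := exists_ne (0 : V)
  have hsub : IsSubrep ρ (k ∙ v) := fun g w hw => by rwa [h g, Module.End.one_apply]
  rcases hρ.2 _ hsub with hbot | htop
  · exact absurd (Submodule.span_singleton_eq_bot.1 hbot) hv
  · rw [← finrank_top k V, ← htop, finrank_span_singleton hv]

theorem IsIrreducibleRep.exists_eq_smul_one_of_mem_center [Monoid G] [IsAlgClosed k]
    [FiniteDimensional k V] {ρ : Representation k G V} (hρ : IsIrreducibleRep ρ) {z : G}
    (hz : z ∈ Submonoid.center G) : ∃ c : k, ρ z = c • 1 := by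
  rw [isIrreducibleRep_iff_isIrreducible] at hρ
  obtain ⟨c, hc⟩ := IsIrreducible.algebraMap_intertwiningMap_bijective_of_isAlgClosed.2
    (IntertwiningMap.centralMul ρ z hz)
  exact ⟨c, (congrArg IntertwiningMap.toLinearMap hc).symm⟩

theorem repIso_of_finrank_intertwiningMap_pos [Monoid G] {ρ : Representation k G V}
    {σ : Representation k G W} [ρ.IsIrreducible] [σ.IsIrreducible]
    (h : 0 < finrank k (IntertwiningMap ρ σ)) : RepIso ρ σ := by
  have := Module.nontrivial_of_finrank_pos h
  obtain ⟨f, hf⟩ := exists_ne (0 : IntertwiningMap ρ σ)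
  exact repIso_of_equiv (f.ofBijective ((IsIrreducible.bijective_or_eq_zero f).resolve_right hf))

theorem finrank_intertwiningMap_eq_of_character_eq [Group G] [Finite G] [CharZero k]
    [FiniteDimensional k V] [FiniteDimensional k W] {U : Type*} [AddCommGroup U] [Module k U]
    [FiniteDimensional k U] (ρ : Representation k G U) {σ : Representation k G V}
    {σ' : Representation k G W} (h : σ.character = σ'.character) :
    finrank k (IntertwiningMap ρ σ) = finrank k (IntertwiningMap ρ σ') := by
  have := Fintype.ofFinite G
  have := invertibleOfNonzero (NeZero.ne (Nat.card G : k))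
  have hσ := card_inv_mul_sum_char_mul_char_eq_finrank ρ σ
  rw [h, card_inv_mul_sum_char_mul_char_eq_finrank ρ σ'] at hσ
  exact_mod_cast hσ.symm

end

theorem isSimpleModule_of_finrank_end_eq_one {K R M : Type*} [Field K] [Ring R] [Algebra K R]
    [AddCommGroup M] [Module R M] [Module K M] [IsScalarTower K R M] [IsSemisimpleModule R M]
    (h : finrank K (Module.End R M) = 1) : IsSimpleModule R M := by
  have : Nontrivial M := (subsingleton_or_nontrivial M).resolve_left fun _ => by
    simp [finrank_zero_of_subsingleton] at h
  rw [isSimpleModule_iff]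
  refine { eq_bot_or_eq_top := fun p => (eq_or_ne p ⊥).imp_right fun hp => ?_ }
  obtain ⟨q, hpq⟩ := exists_isCompl p
  -- the projection onto `p` along `q` is `R`-linear, hence a scalar
  obtain ⟨c, hc⟩ := (finrank_eq_one_iff_of_nonzero' (1 : Module.End R M) one_ne_zero).1 h
    (p.projection q hpq)
  obtain ⟨v, hvp, hv⟩ := p.ne_bot_iff.1 hp
  have hc1 : c = 1 := by
    have hcv : c • v = v := by
      simpa [← hc] using p.projection_apply_of_mem_left hpq hvp
    exact (smul_left_injective K hv).eq_iff.1 (by simpa using hcv)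
  refine eq_top_iff.2 fun x _ => ?_
  simpa [← hc, hc1] using p.projection_apply_mem hpq x

theorem Representation.isIrreducible_of_finrank_intertwiningMap_self_eq_one
    {k G V : Type*} [Field k] [Group G] [Finite G] [NeZero (Nat.card G : k)] [AddCommGroup V]
    [Module k V] (ρ : Representation k G V) (h : finrank k (IntertwiningMap ρ ρ) = 1) :
    ρ.IsIrreducible := by
  rw [irreducible_iff_isSimpleModule_asModule]
  exact isSimpleModule_of_finrank_end_eq_one (K := k)
    ((IntertwiningMap.equivLinearMapAsModule ρ ρ).finrank_eq ▸ h)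

section

variable {K V : Type*} [Field K] [AddCommGroup V] [Module K V] [FiniteDimensional K V]

theorem eq_zero_of_smul_add_smul_one_eq_zero {A : Type*} [Ring A] [Algebra K A] {x : A}
    (hx : ∀ c : K, x ≠ c • 1) {a b : K} (h : a • x + b • 1 = 0) : a = 0 ∧ b = 0 := by
  have ha : a = 0 := by
    by_contra ha
    apply hx (-b / a)
    calc x = a⁻¹ • (a • x) := (inv_smul_smul₀ ha x).symm
      _ = (-b / a) • 1 := by
        rw [eq_neg_of_add_eq_zero_left h, smul_neg, smul_smul, ← neg_smul, div_eq_inv_mul,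
          neg_mul_eq_mul_neg]
  have : Nontrivial A := ⟨⟨x, 0, by simpa using hx 0⟩⟩
  subst ha
  simpa using h

theorem LinearMap.trace_eq_neg_charpoly_coeff [Nontrivial V] (f : Module.End K V) :
    LinearMap.trace K V f = -f.charpoly.coeff (finrank K V - 1) := by
  let b := Module.Free.chooseBasis K V
  have := b.index_nonempty
  rw [LinearMap.trace_eq_matrix_trace K b, ← LinearMap.charpoly_toMatrix f b,
    Matrix.trace_eq_neg_charpoly_coeff, finrank_eq_card_chooseBasisIndex]

theorem LinearMap.cayley_hamilton_of_finrank_eq_three (hV : finrank K V = 3)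
    (f : Module.End K V) :
    f ^ 3 - LinearMap.trace K V f • f ^ 2 + f.charpoly.coeff 1 • f - LinearMap.det f • 1 = 0 := by
  have hdeg : f.charpoly.natDegree = 3 := by rw [LinearMap.charpoly_natDegree, hV]
  have : Nontrivial V := Module.nontrivial_of_finrank_eq_succ hV
  have htr : LinearMap.trace K V f = -f.charpoly.coeff 2 := by
    rw [f.trace_eq_neg_charpoly_coeff, hV]
  have hdet : LinearMap.det f = -f.charpoly.coeff 0 := by
    rw [LinearMap.det_eq_sign_charpoly_coeff, hV]; ring
  have hCH := f.aeval_self_charpoly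
  rw [f.charpoly_monic.as_sum, hdeg] at hCH
  simp only [Finset.sum_range_succ, Finset.sum_range_zero, map_add, map_pow, map_one, map_mul,
    Polynomial.aeval_X, Polynomial.aeval_C, Algebra.algebraMap_eq_smul_one, smul_mul_assoc,
    one_mul, pow_zero, pow_one, zero_add] at hCH
  rw [htr, hdet, ← hCH]
  module

theorem trace_eq_neg_one_of_sq_eq_one (hV : finrank K V = 3) {f : Module.End K V}
    (hf : ∀ c : K, f ≠ c • 1) (hdet : LinearMap.det f = 1) (h2 : f ^ 2 = 1) :
    LinearMap.trace K V f = -1 := by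
  have hCH := LinearMap.cayley_hamilton_of_finrank_eq_three hV f
  rw [pow_succ, h2, hdet, one_mul] at hCH
  have := (eq_zero_of_smul_add_smul_one_eq_zero hf
    (a := 1 + f.charpoly.coeff 1) (b := -LinearMap.trace K V f - 1) (by rw [← hCH]; module)).2
  linear_combination -this

theorem trace_eq_zero_of_pow_three_eq_one (hV : finrank K V = 3) {f : Module.End K V}
    (hf : ∀ c : K, f ≠ c • 1) (hdet : LinearMap.det f = 1) (h3 : f ^ 3 = 1) :
    LinearMap.trace K V f = 0 := by
  have hCH := LinearMap.cayley_hamilton_of_finrank_eq_three hV f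
  rw [h3, hdet] at hCH
  set t := LinearMap.trace K V f
  set c := f.charpoly.coeff 1
  have e1 : c • f = t • f ^ 2 := by
    rw [← sub_eq_zero, ← hCH]; module
  -- multiplying `e1` twice by `f` turns it into a relation between `f` and `1`
  have e2 : c • f ^ 2 = t • 1 :=
    calc c • f ^ 2 = (c • f) * f := by rw [smul_mul_assoc, sq]
      _ = t • 1 := by rw [e1, smul_mul_assoc, ← pow_succ, h3]
  have e3 : c • 1 = t • f :=
    calc c • 1 = (c • f ^ 2) * f := by rw [smul_mul_assoc, ← pow_succ, h3]
      _ = t • f := by rw [e2, smul_mul_assoc, one_mul]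
  exact (eq_zero_of_smul_add_smul_one_eq_zero hf (a := t) (b := -c) (by rw [← e3]; module)).1

end

namespace SL2ZMod5

def S : SL(2, ZMod 5) := ⟨!![0, 1; -1, 0], by decide⟩

theorem neg_one_mem_center : (-1 : SL(2, ZMod 5)) ∈ Submonoid.center SL(2, ZMod 5) :=
  Submonoid.mem_center_iff.2 fun g => by rw [mul_neg_one, neg_one_mul]

theorem sq_or_pow_three_or_pow_five_eq_pm_one : ∀ g : SL(2, ZMod 5),
    g ^ 2 = -1 ∨ g ^ 3 = 1 ∨ g ^ 3 = -1 ∨ g ^ 5 = 1 ∨ g ^ 5 = -1 := by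
  decide +kernel

theorem exists_conj_S_eq_of_sq_eq_neg_one :
    ∀ x : SL(2, ZMod 5), x ^ 2 = -1 → ∃ a, a * S * a⁻¹ = x := by
  decide +kernel

theorem exists_sq_eq_neg_one_and_inv_mul_sq_eq_neg_one :
    ∀ g : SL(2, ZMod 5), ∃ x, x ^ 2 = -1 ∧ (x⁻¹ * g) ^ 2 = -1 := by
  decide +kernel

theorem exists_mul_conj_pow_three_eq_neg_one : ∀ k : SL(2, ZMod 5), k ≠ 1 → k ≠ -1 →
    ∃ a, (k * (a * k * a⁻¹)) ^ 3 = -1 ∧ k * (a * k * a⁻¹) ≠ -1 := by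
  decide +kernel

theorem exists_mul_conj_sq_eq_neg_one : ∀ c : SL(2, ZMod 5), c ^ 3 = -1 → c ≠ -1 →
    ∃ a, (c * (a * c * a⁻¹)) ^ 2 = -1 := by
  decide +kernel

theorem exists_commutatorElement_ne : ∀ g : SL(2, ZMod 5), g ≠ 1 → g ≠ -1 →
    ∃ a : SL(2, ZMod 5), ⁅a, g⁆ ≠ 1 ∧ ⁅a, g⁆ ≠ -1 := by
  decide +kernel

theorem isConj_of_sq_eq_neg_one {x y : SL(2, ZMod 5)} (hx : x ^ 2 = -1) (hy : y ^ 2 = -1) :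
    IsConj x y := by
  obtain ⟨a, rfl⟩ := exists_conj_S_eq_of_sq_eq_neg_one x hx
  obtain ⟨b, rfl⟩ := exists_conj_S_eq_of_sq_eq_neg_one y hy
  exact (isConj_iff.2 ⟨a, rfl⟩).symm.trans (isConj_iff.2 ⟨b, rfl⟩)

-- From `k` one reaches an element of order 6 and then one of order 4; the elements of order 4
-- form a single conjugacy class, and every element is a product of two of them.
theorem normal_eq_top_of_mem (N : Subgroup SL(2, ZMod 5)) [hN : N.Normal] {k : SL(2, ZMod 5)}
    (hk : k ∈ N) (hk1 : k ≠ 1) (hk2 : k ≠ -1) : N = ⊤ := by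
  have mul_conj_mem : ∀ {x}, x ∈ N → ∀ a, x * (a * x * a⁻¹) ∈ N :=
    fun hx a => N.mul_mem hx (hN.conj_mem _ hx a)
  obtain ⟨a, hc3, hc⟩ := exists_mul_conj_pow_three_eq_neg_one k hk1 hk2
  obtain ⟨b, hx⟩ := exists_mul_conj_sq_eq_neg_one _ hc3 hc
  have hxN := mul_conj_mem (mul_conj_mem hk a) b
  have sq_eq_neg_one_mem : ∀ y, y ^ 2 = -1 → y ∈ N := fun y hy => by
    obtain ⟨c, rfl⟩ := isConj_iff.1 (isConj_of_sq_eq_neg_one hx hy)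
    exact hN.conj_mem _ hxN c
  refine eq_top_iff.2 fun g _ => ?_
  obtain ⟨x, hx, hxg⟩ := exists_sq_eq_neg_one_and_inv_mul_sq_eq_neg_one g
  simpa using N.mul_mem (sq_eq_neg_one_mem x hx) (sq_eq_neg_one_mem _ hxg)

theorem monoidHom_eq_one {M : Type*} [CommMonoid M] (f : SL(2, ZMod 5) →* M) : f = 1 := by
  have commutator_mem : ∀ a g, ⁅a, g⁆ ∈ f.ker := fun a g => by
    rw [f.mem_ker, commutatorElement_def, map_mul, map_mul, map_mul, mul_right_comm (f a),
      ← map_mul, mul_inv_cancel, map_one, one_mul, ← map_mul, mul_inv_cancel, map_one]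
  obtain ⟨a, ha1, ha2⟩ := exists_commutatorElement_ne S (by decide) (by decide)
  have hker := normal_eq_top_of_mem f.ker (commutator_mem a S) ha1 ha2
  ext g
  exact f.mem_ker.1 (hker ▸ Subgroup.mem_top g)

theorem sq_or_pow_three_eq_pm_one_of_pow_24_eq_one {g : SL(2, ZMod 5)} (h : g ^ 24 = 1) :
    g ^ 2 = -1 ∨ g ^ 3 = 1 ∨ g ^ 3 = -1 := by
  have hg : g = (g ^ 5) ^ 5 := by rw [← pow_mul, pow_succ, h, one_mul]
  rcases sq_or_pow_three_or_pow_five_eq_pm_one g with h' | h' | h' | h' | h'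
  · exact .inl h'
  · exact .inr (.inl h')
  · exact .inr (.inr h')
  · exact .inr (.inl (by rw [hg, h', one_pow, one_pow]))
  · exact .inr (.inr (by rw [hg, h', ← pow_mul, Odd.neg_one_pow (by decide)]))

section

variable {V : Type*} [AddCommGroup V] [Module ℂ V] {θ : Representation ℂ SL(2, ZMod 5) V}

theorem det_apply (θ : Representation ℂ SL(2, ZMod 5) V) (g : SL(2, ZMod 5)) :
    LinearMap.det (θ g) = 1 :=
  DFunLike.congr_fun (monoidHom_eq_one (LinearMap.det.comp θ)) g

theorem eq_one_or_eq_neg_one_of_apply_eq_one (hθ : IsIrreducibleRep θ) (hV : finrank ℂ V ≠ 1)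
    {g : SL(2, ZMod 5)} (hg : θ g = 1) : g = 1 ∨ g = -1 := by
  by_contra! h
  have hker := normal_eq_top_of_mem θ.ker (θ.mem_ker.2 hg) h.1 h.2
  exact hV (hθ.finrank_eq_one_of_forall_eq_one fun a => θ.mem_ker.1 (hker ▸ Subgroup.mem_top a))

theorem eq_one_or_eq_neg_one_of_forall_commute (hθ : IsIrreducibleRep θ) (hV : finrank ℂ V ≠ 1)
    {g : SL(2, ZMod 5)} (h : ∀ a, Commute (θ a) (θ g)) : g = 1 ∨ g = -1 := by
  by_contra! hg
  obtain ⟨a, ha1, ha2⟩ := exists_commutatorElement_ne g hg.1 hg.2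
  have : θ ⁅a, g⁆ = 1 := by
    rw [commutatorElement_def, map_mul, map_mul, map_mul, mul_assoc (θ a), ← (h a⁻¹).eq,
      ← mul_assoc, ← map_mul, mul_inv_cancel, map_one, one_mul, ← map_mul, mul_inv_cancel, map_one]
  exact (eq_one_or_eq_neg_one_of_apply_eq_one hθ hV this).elim ha1 ha2

theorem apply_ne_smul_one (hθ : IsIrreducibleRep θ) (hV : finrank ℂ V ≠ 1) {g : SL(2, ZMod 5)}
    (hg1 : g ≠ 1) (hg2 : g ≠ -1) (c : ℂ) : θ g ≠ c • 1 := fun h =>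
  (eq_one_or_eq_neg_one_of_forall_commute hθ hV fun _ =>
    h ▸ (Commute.one_right _).smul_right c).elim hg1 hg2

theorem apply_neg_one [FiniteDimensional ℂ V] (hθ : IsIrreducibleRep θ) (hV : finrank ℂ V = 3) :
    θ (-1) = 1 := by
  obtain ⟨c, hc⟩ := hθ.exists_eq_smul_one_of_mem_center neg_one_mem_center
  have := hθ.1
  have hc2 : c ^ 2 = 1 := by
    have h := congrArg (· ^ 2) hc
    simp only [← map_pow, neg_one_sq, map_one, smul_pow, one_pow] at h
    exact (smul_left_injective ℂ one_ne_zero).eq_iff.1 (by rw [← h, one_smul])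
  have hc3 : c ^ 3 = 1 := by simpa [hc, LinearMap.det_smul, hV] using det_apply θ (-1)
  rw [hc, show c = 1 by linear_combination (-c) * hc2 + hc3, one_smul]

-- The paper's `ψ₃`, the character of the three-dimensional irreducible representation of the
-- binary tetrahedral group, on elements of order dividing 24.
def tetraChar (g : SL(2, ZMod 5)) : ℂ :=
  if g = 1 ∨ g = -1 then 3 else if g ^ 2 = -1 then -1 else 0

theorem trace_apply_eq_tetraChar [FiniteDimensional ℂ V] (hθ : IsIrreducibleRep θ)
    (hV : finrank ℂ V = 3) {g : SL(2, ZMod 5)} (hg : g ^ 24 = 1) :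
    LinearMap.trace ℂ V (θ g) = tetraChar g := by
  have hneg := apply_neg_one hθ hV
  have hV1 : finrank ℂ V ≠ 1 := by omega
  unfold tetraChar
  split_ifs with h1 h2
  · rcases h1 with rfl | rfl <;> simp [hneg, hV]
  · obtain ⟨hg1, hg2⟩ := not_or.1 h1
    exact trace_eq_neg_one_of_sq_eq_one hV (apply_ne_smul_one hθ hV1 hg1 hg2) (det_apply θ g)
      (by rw [← map_pow, h2, hneg])
  · obtain ⟨hg1, hg2⟩ := not_or.1 h1
    have h3 : θ g ^ 3 = 1 := by
      rcases sq_or_pow_three_eq_pm_one_of_pow_24_eq_one hg with h | h | h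
      exacts [absurd h h2, by rw [← map_pow, h, map_one], by rw [← map_pow, h, hneg]]
    exact trace_eq_zero_of_pow_three_eq_one hV (apply_ne_smul_one hθ hV1 hg1 hg2)
      (det_apply θ g) h3

theorem character_comp_subtype [FiniteDimensional ℂ V] (hθ : IsIrreducibleRep θ)
    (hV : finrank ℂ V = 3) (K : Subgroup SL(2, ZMod 5)) (hK : Nat.card K = 24) :
    Representation.character (θ.comp K.subtype) = fun g : K => tetraChar g := by
  ext g
  refine trace_apply_eq_tetraChar hθ hV ?_
  rw [← hK, K.subtype_apply, ← K.coe_pow, pow_card_eq_one', K.coe_one]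

def tetraCharNormSq (g : SL(2, ZMod 5)) : ℕ :=
  if g = 1 ∨ g = -1 then 9 else if g ^ 2 = -1 then 1 else 0

theorem tetraChar_mul_tetraChar_inv (g : SL(2, ZMod 5)) :
    tetraChar g * tetraChar g⁻¹ = tetraCharNormSq g := by
  have inv_eq_neg_one : ∀ x : SL(2, ZMod 5), x⁻¹ = -1 ↔ x = -1 := fun x => by
    rw [inv_eq_iff_eq_inv, inv_neg_one]
  simp only [tetraChar, tetraCharNormSq, inv_eq_one, inv_eq_neg_one, inv_pow]
  split_ifs <;> norm_num

theorem sum_tetraCharNormSq_le (K : Subgroup SL(2, ZMod 5)) [Fintype K] (hK : Nat.card K = 24) :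
    ∑ g : K, tetraCharNormSq g ≤ 40 := by
  set pmOne := Finset.univ.filter fun g : K =>
    (g : SL(2, ZMod 5)) = 1 ∨ (g : SL(2, ZMod 5)) = -1
  have hpmOne : pmOne.card ≤ 2 :=
    (Finset.card_le_card_of_injOn (t := {1, -1}) Subtype.val
      (fun g hg => by simpa [pmOne] using hg) Subtype.val_injective.injOn).trans
      Finset.card_le_two
  calc ∑ g : K, tetraCharNormSq g ≤ ∑ g : K, (1 + 8 * if g ∈ pmOne then 1 else 0) :=
        Finset.sum_le_sum fun g _ => by
          simp only [tetraCharNormSq, pmOne, Finset.mem_filter, Finset.mem_univ, true_and]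
          split_ifs <;> omega
    _ = 24 + 8 * pmOne.card := by
        rw [Finset.sum_add_distrib, ← Finset.mul_sum, Finset.sum_boole, Finset.sum_const,
          Finset.card_univ, ← Nat.card_eq_fintype_card, hK, Finset.filter_mem_eq_inter,
          Finset.univ_inter, smul_eq_mul, mul_one, Nat.cast_id]
    _ ≤ 40 := by omega

theorem finrank_intertwiningMap_self_eq_one {K : Subgroup SL(2, ZMod 5)} (hK : Nat.card K = 24)
    [FiniteDimensional ℂ V] [Nontrivial V] {ρ : Representation ℂ K V}
    (hρ : ρ.character = fun g : K => tetraChar g) : finrank ℂ (IntertwiningMap ρ ρ) = 1 := by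
  have := Fintype.ofFinite K
  have := invertibleOfNonzero (show (Nat.card K : ℂ) ≠ 0 by rw [hK]; norm_num)
  have hsum := card_inv_mul_sum_char_mul_char_eq_finrank ρ ρ
  simp only [hρ, InvMemClass.coe_inv, tetraChar_mul_tetraChar_inv, hK] at hsum
  have h24 : 24 * finrank ℂ (IntertwiningMap ρ ρ) = ∑ g : K, tetraCharNormSq g := by
    have : ((24 * finrank ℂ (IntertwiningMap ρ ρ) : ℕ) : ℂ) =
        ((∑ g : K, tetraCharNormSq g : ℕ) : ℂ) := by
      rw [Nat.cast_mul, ← hsum, Nat.cast_sum, mul_inv_cancel_left₀ (by norm_num)]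
    exact_mod_cast this
  have : Nontrivial (IntertwiningMap ρ ρ) :=
    ⟨⟨1, 0, fun h => one_ne_zero (congrArg IntertwiningMap.toLinearMap h)⟩⟩
  have := Module.finrank_pos (R := ℂ) (M := IntertwiningMap ρ ρ)
  have := sum_tetraCharNormSq_le K hK
  omega

end

end SL2ZMod5

/-- **Statement 9.** Let `K` be a subgroup of `SL(2, ℤ/5ℤ)` of order `24` (a binary
tetrahedral subgroup) and let `θ`, `θ'` be irreducible three-dimensional complex
representations of `SL(2, ℤ/5ℤ)`. Then the restrictions of `θ` and `θ'` to `K` are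
irreducible and isomorphic to each other. -/
theorem res_three_dim_to_order24_irreducible_and_iso
    (K : Subgroup (Matrix.SpecialLinearGroup (Fin 2) (ZMod 5))) (hK : Nat.card K = 24)
    {V W : Type*} [AddCommGroup V] [Module ℂ V] [AddCommGroup W] [Module ℂ W]
    (θ : Representation ℂ (Matrix.SpecialLinearGroup (Fin 2) (ZMod 5)) V)
    (θ' : Representation ℂ (Matrix.SpecialLinearGroup (Fin 2) (ZMod 5)) W)
    (hdV : Module.finrank ℂ V = 3) (hdW : Module.finrank ℂ W = 3)
    (hθ : IsIrreducibleRep θ) (hθ' : IsIrreducibleRep θ') :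
    IsIrreducibleRep (θ.comp K.subtype) ∧ IsIrreducibleRep (θ'.comp K.subtype) ∧
      RepIso (θ.comp K.subtype) (θ'.comp K.subtype) := by
  have := Module.finite_of_finrank_pos (show 0 < finrank ℂ V by omega)
  have := Module.finite_of_finrank_pos (show 0 < finrank ℂ W by omega)
  have := hθ.1
  have := hθ'.1
  have hχ := SL2ZMod5.character_comp_subtype hθ hdV K hK
  have hχ' := SL2ZMod5.character_comp_subtype hθ' hdW K hK
  have hρ := SL2ZMod5.finrank_intertwiningMap_self_eq_one hK hχ
  have hσ := SL2ZMod5.finrank_intertwiningMap_self_eq_one hK hχ'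
  have hρσ := (finrank_intertwiningMap_eq_of_character_eq _ (hχ.trans hχ'.symm)).symm.trans hρ
  have := isIrreducible_of_finrank_intertwiningMap_self_eq_one _ hρ
  have := isIrreducible_of_finrank_intertwiningMap_self_eq_one _ hσ
  rw [isIrreducibleRep_iff_isIrreducible, isIrreducibleRep_iff_isIrreducible]
  exact ⟨‹_›, ‹_›, repIso_of_finrank_intertwiningMap_pos (by omega)⟩
end

section
/- Let Q be a subgroup of SL(2, ℤ/5ℤ) of order 8, and let θ and θ′ be irreducible two-dimensional complex representations of SL(2, ℤ/5ℤ). Then the restrictions of θ and θ′ to Q are irreducible and are isomorphic to each other as representations of Q. -/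
/-!
Every transvection of `SL(2, F)` is a commutator `⁅d, t⁆` with `d = diag(a, a⁻¹)`, `a ^ 2 ≠ 1`,
so a homomorphism sending `d` to an element commuting with its whole image is trivial. Applied
to `det ∘ θ` this gives `det θ = 1`. Over `𝔽₅` take `a = 2`, so `d ^ 2 = -1`: if `θ (-1) = 1`,
then `θ d` is an involution of determinant `1` on a plane, hence `±1`, and `θ` would be trivial.
So `θ (-1) = -1`, since `θ (-1)` is a central involution of an irreducible representation.

Since `-1` is the only involution of `SL(2, 𝔽₅)` and there are no elements of order `8`, a
subgroup of order `8` is generated by `a, b` with `a ^ 2 = b ^ 2 = (a * b) ^ 2 = -1`, whose images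
`A, B` satisfy `A ^ 2 = B ^ 2 = (A * B) ^ 2 = -1`. For an `i`-eigenvector `e` of `A`, the vector
`B e` is a `-i`-eigenvector, so every nonzero invariant subspace contains the basis `(e, B e)`,
in which `A` and `B` have the same matrices for `θ` and `θ'`.
-/

open Matrix Matrix.SpecialLinearGroup Module
open scoped MatrixGroups commutatorElement

namespace Matrix

variable {F : Type*} [Field F]

theorem eq_one_or_eq_neg_one_of_mul_self_eq_one_of_det_eq_one (h2 : (2 : F) ≠ 0)
    {M : Matrix (Fin 2) (Fin 2) F} (hM : M * M = 1) (hdet : M.det = 1) : M = 1 ∨ M = -1 := by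
  have hadj : adjugate M = M := by
    calc adjugate M = M * M * adjugate M := by rw [hM, one_mul]
      _ = M := by rw [mul_assoc, mul_adjugate, hdet, one_smul, mul_one]
  rw [adjugate_fin_two] at hadj
  have hentry (i j : Fin 2) := congrFun (congrFun hadj i) j
  have h01 : M 0 1 = 0 := by
    have h : -M 0 1 = M 0 1 := by simpa using hentry 0 1
    exact (mul_eq_zero.mp (by linear_combination -h : (2 : F) * M 0 1 = 0)).resolve_left h2
  have h10 : M 1 0 = 0 := by
    have h : -M 1 0 = M 1 0 := by simpa using hentry 1 0
    exact (mul_eq_zero.mp (by linear_combination -h : (2 : F) * M 1 0 = 0)).resolve_left h2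
  have h11 : M 1 1 = M 0 0 := by simpa using hentry 0 0
  have hscalar : M = M 0 0 • (1 : Matrix (Fin 2) (Fin 2) F) := by
    ext i j; fin_cases i <;> fin_cases j <;> simp [h01, h10, h11]
  have hsq : M 0 0 * M 0 0 = 1 := by
    simpa [Matrix.mul_apply, Fin.sum_univ_two, h01] using congrFun (congrFun hM 0) 0
  rcases mul_self_eq_one_iff.mp hsq with h | h
  · left; rw [hscalar, h, one_smul]
  · right; rw [hscalar, h, neg_one_smul]

theorem SL2.eq_one_or_eq_neg_one_of_sq_eq_one (h2 : (2 : F) ≠ 0) {g : SL(2, F)} (hg : g ^ 2 = 1) :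
    g = 1 ∨ g = -1 := by
  have hM : (g : Matrix (Fin 2) (Fin 2) F) * g = 1 := by
    rw [← coe_mul, ← sq, hg, coe_one]
  rcases eq_one_or_eq_neg_one_of_mul_self_eq_one_of_det_eq_one h2 hM g.2 with h | h
  · exact Or.inl (Subtype.ext h)
  · exact Or.inr (Subtype.ext h)

theorem commutator_diag2_transvection_one_zero (a : F) (ha : a ≠ 0) (b c : F)
    (hc : c = b * (a⁻¹ ^ 2 - 1)) :
    ⁅diag2 a ha, SpecialLinearGroup.transvection one_ne_zero b⁆ =
      (SpecialLinearGroup.transvection one_ne_zero c : SL(2, F)) := by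
  rw [commutatorElement_def, diag2_inv a ha, SpecialLinearGroup.transvection_inv one_ne_zero b]
  ext i j
  simp only [coe_mul, SpecialLinearGroup.transvection_coe, diag2_coe', mul_apply, Fin.sum_univ_two]
  fin_cases i <;> fin_cases j <;> simp [hc] <;> field_simp; ring

theorem SL2.eq_one_of_commute_diag2 {H : Type*} [Group H] (φ : SL(2, F) →* H) {a : F}
    (ha : a ≠ 0) (hasq : a ^ 2 ≠ 1) (hcomm : ∀ g, Commute (φ (diag2 a ha)) (φ g)) : φ = 1 := by
  have hcomm_ker (g : SL(2, F)) : φ ⁅diag2 a ha, g⁆ = 1 := by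
    rw [map_commutatorElement, commutatorElement_eq_one_iff_commute]
    exact hcomm g
  have hainv : a⁻¹ ^ 2 - 1 ≠ 0 := by
    rw [inv_pow, sub_ne_zero]; exact fun h => hasq (inv_eq_one.mp h)
  ext A
  refine SL2.transvection_induction (φ · = 1) (fun i j hij c => ?_)
    (fun A B hA hB => by simp only [map_mul, hA, hB, one_mul]) A
  fin_cases i <;> fin_cases j <;> simp only [ne_eq, not_true_eq_false] at hij
  · rw [← commutator_diag2_transvection a ha (c / (a ^ 2 - 1)) c
      (div_mul_cancel₀ c (sub_ne_zero_of_ne hasq)).symm]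
    exact hcomm_ker _
  · rw [← commutator_diag2_transvection_one_zero a ha (c / (a⁻¹ ^ 2 - 1)) c
      (div_mul_cancel₀ c hainv).symm]
    exact hcomm_ker _

end Matrix

theorem LinearMap.eq_one_or_eq_neg_one_of_mul_self_eq_one_of_det_eq_one {K V : Type*} [Field K]
    [AddCommGroup V] [Module K V] (h2 : (2 : K) ≠ 0) (hV : finrank K V = 2) {T : Module.End K V}
    (hT : T * T = 1) (hdet : LinearMap.det T = 1) : T = 1 ∨ T = -1 := by
  have : Module.Finite K V := Module.finite_of_finrank_eq_succ hV
  let e := LinearMap.toMatrixAlgEquiv (finBasisOfFinrankEq K V hV)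
  have hM : e T * e T = 1 := by rw [← map_mul, hT, map_one]
  have hdetM : (e T).det = 1 := (LinearMap.det_toMatrix _ T).trans hdet
  rcases Matrix.eq_one_or_eq_neg_one_of_mul_self_eq_one_of_det_eq_one h2 hM hdetM with h | h
  · exact Or.inl (e.injective (by rw [h, map_one]))
  · exact Or.inr (e.injective (by rw [h, map_neg, map_one]))

namespace IsIrreducibleRep

variable {k G V : Type*} [Monoid G] [AddCommGroup V]

theorem eq_one_or_eq_neg_one_of_commute [CommRing k] [Module k V] {ρ : Representation k G V}
    (hρ : IsIrreducibleRep ρ) {T : Module.End k V} (hT : ∀ g, Commute T (ρ g)) (hT2 : T * T = 1) :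
    T = 1 ∨ T = -1 := by
  have hsub : IsSubrep ρ (LinearMap.ker (T - 1)) := by
    intro g v hv
    rw [LinearMap.mem_ker, LinearMap.sub_apply, Module.End.one_apply, sub_eq_zero] at hv ⊢
    rw [← Module.End.mul_apply, (hT g).eq, Module.End.mul_apply, hv]
  rcases hρ.2 _ hsub with hbot | htop
  · right
    have hfactor : (T - 1) * (T + 1) = 0 := by
      rw [sub_mul, mul_add, mul_add, hT2, mul_one, one_mul, one_mul]; abel
    have hplus : T + 1 = 0 := by
      ext v
      apply LinearMap.ker_eq_bot.mp hbot
      rw [← Module.End.mul_apply, hfactor, LinearMap.zero_apply, map_zero]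
    exact eq_neg_of_add_eq_zero_left hplus
  · left
    exact sub_eq_zero.mp (LinearMap.ker_eq_top.mp htop)

theorem finrank_eq_one_of_forall_eq_one_s11 [Field k] [Module k V] {ρ : Representation k G V}
    (hρ : IsIrreducibleRep ρ) (htriv : ∀ g, ρ g = 1) : finrank k V = 1 := by
  have := hρ.1
  obtain ⟨v, hv⟩ := exists_ne (0 : V)
  have hsub : IsSubrep ρ (k ∙ v) := fun g w hw => by simpa [htriv g] using hw
  rcases hρ.2 _ hsub with h | h
  · exact absurd (Submodule.span_singleton_eq_bot.mp h) hv
  · rw [← finrank_top, ← h, finrank_span_singleton hv]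

end IsIrreducibleRep

namespace Matrix.SL2

variable {F k V : Type*} [Field F] [AddCommGroup V]

theorem diag2_sq_eq_neg_one {a : F} (ha : a ≠ 0) (hsq : a ^ 2 = -1) : diag2 a ha ^ 2 = -1 := by
  have hinv : a⁻¹ * a⁻¹ = -1 := by rw [← mul_inv, ← sq, hsq, inv_neg, inv_one]
  ext i j
  fin_cases i <;> fin_cases j <;> simp [sq, diag2_coe', ← hsq, hinv]

theorem det_representation_eq_one [CommRing k] [Module k V] {a : F} (ha : a ≠ 0)
    (hasq : a ^ 2 ≠ 1) (θ : Representation k SL(2, F) V) (g : SL(2, F)) :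
    LinearMap.det (θ g) = 1 := by
  have h := eq_one_of_commute_diag2 ((Units.map LinearMap.det).comp θ.asGroupHom) ha hasq
    fun _ => Commute.all _ _
  simpa [Representation.asGroupHom_apply] using congrArg Units.val (DFunLike.congr_fun h g)

theorem representation_neg_one_eq_neg_one [Field k] [Module k V] (h2 : (2 : k) ≠ 0) {a : F}
    (hsq : a ^ 2 = -1) (hasq : a ^ 2 ≠ 1) {θ : Representation k SL(2, F) V} (hV : finrank k V = 2)
    (hθ : IsIrreducibleRep θ) : θ (-1) = -1 := by
  have ha : a ≠ 0 := by rintro rfl; simp at hsq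
  have hcentral (g : SL(2, F)) : Commute (θ (-1)) (θ g) := by
    simp only [Commute, SemiconjBy, ← map_mul, neg_one_mul, mul_neg_one]
  have hinvol : θ (-1) * θ (-1) = 1 := by rw [← map_mul, neg_one_mul, neg_neg, map_one]
  refine (hθ.eq_one_or_eq_neg_one_of_commute hcentral hinvol).resolve_left fun hone => ?_
  set d := diag2 a ha
  have hd : θ d = 1 ∨ θ d = -1 := by
    refine LinearMap.eq_one_or_eq_neg_one_of_mul_self_eq_one_of_det_eq_one h2 hV ?_
      (det_representation_eq_one ha hasq θ d)
    rw [← map_mul, ← sq, diag2_sq_eq_neg_one ha hsq, hone]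
  have htriv : θ.asGroupHom = 1 := by
    refine eq_one_of_commute_diag2 θ.asGroupHom ha hasq fun g => ?_
    rw [← Commute.units_val_iff, Representation.asGroupHom_apply,
      Representation.asGroupHom_apply]
    rcases hd with h | h <;> rw [h]
    exacts [Commute.one_left _, (Commute.one_left _).neg_left]
  have := hθ.finrank_eq_one_of_forall_eq_one_s11 fun g => by
    simpa [Representation.asGroupHom_apply] using congrArg Units.val (DFunLike.congr_fun htriv g)
  omega

end Matrix.SL2

structure IsQuaternionPair {R : Type*} [Ring R] (a b : R) : Prop where
  mul_self_left : a * a = -1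
  mul_self_right : b * b = -1
  mul_self_mul : a * b * (a * b) = -1

namespace IsQuaternionPair

theorem anticomm {R : Type*} [Ring R] {a b : R} (h : IsQuaternionPair a b) :
    b * a = -(a * b) :=
  calc b * a = (a * a) * (b * a) * (b * b) := by
        rw [h.mul_self_left, h.mul_self_right]; noncomm_ring
    _ = a * (a * b * (a * b)) * b := by noncomm_ring
    _ = -(a * b) := by rw [h.mul_self_mul]; noncomm_ring

open Complex

variable {V W : Type*} [AddCommGroup V] [Module ℂ V] [AddCommGroup W] [Module ℂ W]
  {A B : Module.End ℂ V}

theorem right_apply_right_apply (h : IsQuaternionPair A B) (v : V) : B (B v) = -v := by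
  rw [← Module.End.mul_apply, h.mul_self_right, LinearMap.neg_apply, Module.End.one_apply]

theorem left_apply_right_apply (h : IsQuaternionPair A B) (v : V) : A (B v) = -B (A v) := by
  rw [← Module.End.mul_apply, ← Module.End.mul_apply, ← LinearMap.neg_apply, h.anticomm, neg_neg]

theorem left_apply_right_apply_of_eigen (h : IsQuaternionPair A B) {e : V} (he : A e = I • e) :
    A (B e) = (-I) • B e := by
  rw [h.left_apply_right_apply, he, map_smul, neg_smul]

theorem right_apply_ne_zero (h : IsQuaternionPair A B) {v : V} (hv : v ≠ 0) : B v ≠ 0 :=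
  fun h0 => hv (by rw [← neg_eq_zero, ← h.right_apply_right_apply, h0, map_zero])

theorem exists_eigenvector_mem (h : IsQuaternionPair A B) {p : Submodule ℂ V}
    (hA : ∀ v ∈ p, A v ∈ p) (hB : ∀ v ∈ p, B v ∈ p) (hp : p ≠ ⊥) :
    ∃ e ∈ p, e ≠ 0 ∧ A e = I • e := by
  obtain ⟨v, hvp, hv⟩ := p.ne_bot_iff.mp hp
  by_cases hu : A v + I • v = 0
  · -- `v` is an eigenvector for `-I`, and `B` swaps the two eigenspaces
    refine ⟨B v, hB v hvp, h.right_apply_ne_zero hv, ?_⟩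
    rw [h.left_apply_right_apply, eq_neg_of_add_eq_zero_left hu, map_neg, map_smul, neg_neg]
  · refine ⟨A v + I • v, p.add_mem (hA v hvp) (p.smul_mem I hvp), hu, ?_⟩
    have hAA : A (A v) = -v := by
      rw [← Module.End.mul_apply, h.mul_self_left, LinearMap.neg_apply, Module.End.one_apply]
    rw [map_add, map_smul, hAA, smul_add, smul_smul, I_mul_I, neg_one_smul, add_comm]

theorem linearIndependent_eigenvector (h : IsQuaternionPair A B) {e : V} (he : e ≠ 0)
    (hAe : A e = I • e) :
    LinearIndependent ℂ ![e, B e] := by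
  refine Module.End.eigenvectors_linearIndependent' A ![I, -I] ?_ _ fun i => ?_
  · intro i j hij
    fin_cases i <;> fin_cases j <;> first | rfl | norm_num [Complex.ext_iff] at hij
  · fin_cases i
    · exact Module.End.hasEigenvector_iff.mpr ⟨Module.End.mem_eigenspace_iff.mpr hAe, he⟩
    · exact Module.End.hasEigenvector_iff.mpr
        ⟨Module.End.mem_eigenspace_iff.mpr (h.left_apply_right_apply_of_eigen hAe),
          h.right_apply_ne_zero he⟩

theorem eq_top (h : IsQuaternionPair A B) (hV : finrank ℂ V = 2) {p : Submodule ℂ V}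
    (hA : ∀ v ∈ p, A v ∈ p) (hB : ∀ v ∈ p, B v ∈ p) (hp : p ≠ ⊥) : p = ⊤ := by
  obtain ⟨e, hep, he, hAe⟩ := h.exists_eigenvector_mem hA hB hp
  have hspan := (h.linearIndependent_eigenvector he hAe).span_eq_top_of_card_eq_finrank
    (by simp [hV])
  rw [eq_top_iff, ← hspan, Submodule.span_le, Set.range_subset_iff]
  intro i
  fin_cases i
  exacts [hep, hB e hep]

theorem exists_basis (h : IsQuaternionPair A B) (hV : finrank ℂ V = 2) :
    ∃ b : Basis (Fin 2) ℂ V, A (b 0) = I • b 0 ∧ b 1 = B (b 0) := by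
  have : Nontrivial V := Module.nontrivial_of_finrank_eq_succ hV
  obtain ⟨e, -, he, hAe⟩ := h.exists_eigenvector_mem (p := ⊤) (fun _ _ => trivial)
    (fun _ _ => trivial) top_ne_bot
  refine ⟨basisOfLinearIndependentOfCardEqFinrank (h.linearIndependent_eigenvector he hAe)
    (by simp [hV]), ?_⟩
  simpa [coe_basisOfLinearIndependentOfCardEqFinrank] using hAe

theorem exists_linearEquiv (h : IsQuaternionPair A B) {A' B' : Module.End ℂ W}
    (h' : IsQuaternionPair A' B') (hV : finrank ℂ V = 2) (hW : finrank ℂ W = 2) :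
    ∃ e : V ≃ₗ[ℂ] W, e.toLinearMap ∘ₗ A = A' ∘ₗ e.toLinearMap ∧
      e.toLinearMap ∘ₗ B = B' ∘ₗ e.toLinearMap := by
  obtain ⟨b, hAb, hb⟩ := h.exists_basis hV
  obtain ⟨b', hAb', hb'⟩ := h'.exists_basis hW
  set e := b.equiv b' (Equiv.refl _)
  have he (i : Fin 2) : e (b i) = b' i := b.equiv_apply i b' (Equiv.refl _)
  refine ⟨e, b.ext (Fin.forall_fin_two.mpr ⟨?_, ?_⟩), b.ext (Fin.forall_fin_two.mpr ⟨?_, ?_⟩)⟩ <;>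
    simp only [LinearMap.comp_apply, LinearEquiv.coe_coe]
  · rw [hAb, map_smul, he, hAb']
  · rw [hb, h.left_apply_right_apply_of_eigen hAb, map_smul, ← hb, he, hb',
      h'.left_apply_right_apply_of_eigen hAb']
  · rw [← hb, he, he, hb']
  · rw [hb, h.right_apply_right_apply, map_neg, he, ← hb, he, hb',
      h'.right_apply_right_apply]

theorem isIrreducibleRep_comp_subtype {G : Type*} [Group G] {ρ : Representation ℂ G V}
    (hV : finrank ℂ V = 2) {H : Subgroup G} {a b : G} (ha : a ∈ H) (hb : b ∈ H)
    (h : IsQuaternionPair (ρ a) (ρ b)) : IsIrreducibleRep (ρ.comp H.subtype) :=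
  ⟨Module.nontrivial_of_finrank_eq_succ hV, fun _ hp =>
    or_iff_not_imp_left.mpr (h.eq_top hV (hp ⟨a, ha⟩) (hp ⟨b, hb⟩))⟩

end IsQuaternionPair

theorem Representation.isQuaternionPair {k G V : Type*} [CommRing k] [Monoid G] [AddCommGroup V]
    [Module k V] (ρ : Representation k G V) {z a b : G} (hz : ρ z = -1) (ha : a ^ 2 = z)
    (hb : b ^ 2 = z) (hab : (a * b) ^ 2 = z) : IsQuaternionPair (ρ a) (ρ b) where
  mul_self_left := by rw [← map_mul, ← sq, ha, hz]
  mul_self_right := by rw [← map_mul, ← sq, hb, hz]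
  mul_self_mul := by rw [← map_mul, ← map_mul, ← sq, hab, hz]

theorem Subgroup.closure_pair_eq_of_orderOf_eq_four {G : Type*} [Group G] {Q : Subgroup G}
    (hQ : Nat.card Q = 8) {a b : G} (hord : orderOf a = 4) (haQ : a ∈ Q) (hbQ : b ∈ Q)
    (hb : b ∉ zpowers a) : closure {a, b} = Q := by
  have : Finite Q := Nat.finite_of_card_ne_zero (by omega)
  set S := closure {a, b}
  have hSQ : S ≤ Q := (closure_le Q).mpr (Set.insert_subset haQ (Set.singleton_subset_iff.mpr hbQ))
  have haS : zpowers a ≤ S := zpowers_le.mpr (subset_closure (by simp))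
  have hbS : b ∈ S := subset_closure (by simp)
  have h4 : 4 ∣ Nat.card S := by simpa [Nat.card_zpowers, hord] using card_dvd_of_le haS
  have h8 : Nat.card S ∣ 8 := hQ ▸ card_dvd_of_le hSQ
  have hne : Nat.card S ≠ 4 := fun h => by
    have : Finite S := Nat.finite_of_card_ne_zero (by omega)
    exact hb (eq_of_le_of_card_ge haS (by simp [h, Nat.card_zpowers, hord]) ▸ hbS)
  have hS : Nat.card S = 8 := by
    obtain ⟨m, hm⟩ := h4
    have : m ≤ 2 := by have := Nat.le_of_dvd (by norm_num) h8; omega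
    interval_cases m <;> simp_all
  exact eq_of_le_of_card_ge hSQ (by omega)

theorem Subgroup.exists_quaternion_generators {G : Type*} [Group G] {z : G}
    (hinvol : ∀ x : G, x ^ 2 = 1 → x = 1 ∨ x = z) (hpow : ∀ x : G, x ^ 8 = 1 → x ^ 4 = 1)
    {Q : Subgroup G} (hQ : Nat.card Q = 8) :
    ∃ a ∈ Q, ∃ b ∈ Q, a ^ 2 = z ∧ b ^ 2 = z ∧ (a * b) ^ 2 = z ∧ closure {a, b} = Q := by
  have : Finite Q := Nat.finite_of_card_ne_zero (by omega)
  have hpow8 (x) (hx : x ∈ Q) : x ^ 8 = 1 := by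
    simpa [hQ] using congrArg Subtype.val (pow_card_eq_one' (G := Q) (x := ⟨x, hx⟩))
  have hsq (x) (hx : x ∈ Q) (hx1 : x ≠ 1) (hxz : x ≠ z) : x ^ 2 = z := by
    refine (hinvol _ (by rw [← pow_mul]; exact hpow x (hpow8 x hx))).resolve_left fun h => ?_
    rcases hinvol x h with h | h
    exacts [hx1 h, hxz h]
  obtain ⟨a, haQ, ha⟩ : ∃ a ∈ Q, a ∉ ({1, z} : Set G) := by
    refine Set.exists_mem_notMem_of_ncard_lt_ncard ?_
    calc ({1, z} : Set G).ncard ≤ 2 := (Set.ncard_insert_le _ _).trans (by simp)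
      _ < (Q : Set G).ncard := by rw [← Nat.card_coe_set_eq, SetLike.coe_sort_coe, hQ]; norm_num
  simp only [Set.mem_insert_iff, Set.mem_singleton_iff, not_or] at ha
  have ha2 : a ^ 2 = z := hsq a haQ ha.1 ha.2
  have hord : orderOf a = 4 := orderOf_eq_prime_pow (p := 2) (n := 1)
    (fun h => by rcases hinvol a h with h | h; exacts [ha.1 h, ha.2 h]) (hpow a (hpow8 a haQ))
  have hsq' (x) (hx : x ∈ Q) (hxa : x ∉ zpowers a) : x ^ 2 = z :=
    hsq x hx (fun h => hxa (h ▸ one_mem _)) (fun h => hxa (h ▸ ha2 ▸ npow_mem_zpowers a 2))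
  obtain ⟨b, hbQ, hb⟩ : ∃ b ∈ Q, b ∉ zpowers a := by
    have : Finite (zpowers a) := Nat.finite_of_card_ne_zero (by simp [Nat.card_zpowers, hord])
    refine Set.exists_mem_notMem_of_ncard_lt_ncard ?_
    rw [← Nat.card_coe_set_eq, ← Nat.card_coe_set_eq]
    simp [Nat.card_zpowers, hord, hQ]
  have hab : a * b ∉ zpowers a := fun h =>
    hb (by simpa using mul_mem (inv_mem (mem_zpowers a)) h)
  exact ⟨a, haQ, b, hbQ, ha2, hsq' b hbQ hb, hsq' _ (mul_mem haQ hbQ) hab,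
    closure_pair_eq_of_orderOf_eq_four hQ hord haQ hbQ hb⟩

theorem RepIso.comp_subtype_of_closure_eq {k G V W : Type*} [CommSemiring k] [Group G]
    [AddCommMonoid V] [Module k V] [AddCommMonoid W] [Module k W] {ρ : Representation k G V}
    {σ : Representation k G W} (e : V ≃ₗ[k] W) {s : Set G}
    (hs : ∀ g ∈ s, e.toLinearMap ∘ₗ ρ g = σ g ∘ₗ e.toLinearMap) {H : Subgroup G}
    (hH : Subgroup.closure s = H) : RepIso (ρ.comp H.subtype) (σ.comp H.subtype) := by
  let ρ' : Representation k G W := (e.conjAlgEquiv k : Module.End k V →* Module.End k W).comp ρ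
  have hρ' (g : G) : ρ' g = e.toLinearMap ∘ₗ ρ g ∘ₗ e.symm.toLinearMap := rfl
  have hclosure := MonoidHom.eqOn_closure (f := ρ') (g := σ) (s := s) fun g hg => by
    ext v
    simpa [hρ'] using LinearMap.congr_fun (hs g hg) (e.symm v)
  refine ⟨e, fun g v => ?_⟩
  have := hclosure (hH ▸ g.2 : (g : G) ∈ Subgroup.closure s)
  simp [← this, hρ']

instance : Fact (Nat.Prime 5) := ⟨Nat.prime_five⟩

-- `8` divides `|SL(2, 𝔽₅)| = 120`, so this is not a consequence of Lagrange's theorem.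
set_option maxRecDepth 2000 in
theorem SL2ZMod5.pow_four_eq_one_of_pow_eight_eq_one :
    ∀ g : SL(2, ZMod 5), g ^ 8 = 1 → g ^ 4 = 1 := by
  decide

/-- **Statement 9.** Let `K` be a subgroup of `SL(2, ℤ/5ℤ)` of order `8` (a quaternion
subgroup) and let `θ`, `θ'` be irreducible two-dimensional complex
representations of `SL(2, ℤ/5ℤ)`. Then the restrictions of `θ` and `θ'` to `Q` are
irreducible and isomorphic to each other. -/
theorem res_two_dim_to_order8_irreducible_and_iso
    (Q : Subgroup (Matrix.SpecialLinearGroup (Fin 2) (ZMod 5))) (hQ : Nat.card Q = 8)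
    {V W : Type*} [AddCommGroup V] [Module ℂ V] [AddCommGroup W] [Module ℂ W]
    (θ : Representation ℂ (Matrix.SpecialLinearGroup (Fin 2) (ZMod 5)) V)
    (θ' : Representation ℂ (Matrix.SpecialLinearGroup (Fin 2) (ZMod 5)) W)
    (hdV : Module.finrank ℂ V = 2) (hdW : Module.finrank ℂ W = 2)
    (hθ : IsIrreducibleRep θ) (hθ' : IsIrreducibleRep θ') :
    IsIrreducibleRep (θ.comp Q.subtype) ∧ IsIrreducibleRep (θ'.comp Q.subtype) ∧
      RepIso (θ.comp Q.subtype) (θ'.comp Q.subtype) := by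
  obtain ⟨a, haQ, b, hbQ, ha, hb, hab, hQab⟩ := Subgroup.exists_quaternion_generators
    (fun _ => SL2.eq_one_or_eq_neg_one_of_sq_eq_one (by decide))
    SL2ZMod5.pow_four_eq_one_of_pow_eight_eq_one hQ
  have h2sq : (2 : ZMod 5) ^ 2 = -1 := by decide
  have h2sq' : (2 : ZMod 5) ^ 2 ≠ 1 := by decide
  have hV := θ.isQuaternionPair
    (SL2.representation_neg_one_eq_neg_one two_ne_zero h2sq h2sq' hdV hθ) ha hb hab
  have hW := θ'.isQuaternionPair
    (SL2.representation_neg_one_eq_neg_one two_ne_zero h2sq h2sq' hdW hθ') ha hb hab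
  obtain ⟨e, heA, heB⟩ := hV.exists_linearEquiv hW hdV hdW
  refine ⟨hV.isIrreducibleRep_comp_subtype hdV haQ hbQ,
    hW.isIrreducibleRep_comp_subtype hdW haQ hbQ, RepIso.comp_subtype_of_closure_eq e ?_ hQab⟩
  rintro g (rfl | rfl)
  exacts [heA, heB]
end
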